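/- arXiv:1703.02856 — 2 statements merged into one kernel-verified Lean document; each statement's English description precedes it below -/
import Mathlib

section
/- Let r ≥ 1, σ ≥ 1, δ ≥ 0. Then there exists a constant C_r > 0 (depending only on r and σ) such that for all real ξ, η: |(1+ξ^2)^{r/2} e^{δ(1+ξ^2)^{1/(2σ)}} - (1+η^2)^{r/2} e^{δ(1+η^2)^{1/(2σ)}}| ≤ C_r |ξ-η| { (1+|ξ-η|^2)^{(r-1)/2} + (1+|η|^2)^{(r-1)/2} + δ[ (1+|ξ-η|^2)^{(r-1)/2 + 1/(2σ)} + (1+|η|^2)^{(r-1)/2 + 1/(2σ)} ] e^{δ(1+|ξ-η|^2)^{1/(2σ)}} e^{δ(1+|η|^2)^{1/(2σ)}} }. -/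
/-!
With `⟨x⟩ = (1 + x²)^{1/2}` and `ρ = 1/(2σ) ≤ 1/2` the weight is `f(x) = ⟨x⟩^r e^{δ⟨x⟩^{2ρ}}`.
Since `|x| ≤ ⟨x⟩`, `|f'(x)| ≤ (r + δ⟨x⟩^{2ρ}) ⟨x⟩^{r-1} e^{δ⟨x⟩^{2ρ}}`, and `eᵗ ≤ 1 + t eᵗ` turns
this into `r⟨x⟩^{r-1} + (r+1) δ ⟨x⟩^{r-1+2ρ} e^{δ⟨x⟩^{2ρ}}`, where only the `δ`-term carries the
exponential. By the mean value theorem it remains to bound this at points `c` with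
`|c - η| ≤ |ξ - η|`. Writing `c = (c - η) + η`, each power `⟨c⟩^s` is at most
`4^s (⟨ξ - η⟩^s + ⟨η⟩^s)`; and since `2ρ ≤ 1`, the map `x ↦ ⟨x⟩^{2ρ}` is subadditive, so the
exponential factor is submultiplicative.
-/

open Real

lemma exp_le_one_add_mul_exp (t : ℝ) : exp t ≤ 1 + t * exp t := by
  have h : (1 - t) * exp t ≤ 1 := by
    calc (1 - t) * exp t ≤ exp (-t) * exp t := by
          gcongr; linarith [add_one_le_exp (-t)]
      _ = 1 := by rw [← exp_add, neg_add_cancel, exp_zero]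
  linarith

lemma one_add_sq_rpow_le_of_abs_le {s u v : ℝ} (hs : 0 ≤ s) (h : |u| ≤ |v|) :
    (1 + u ^ 2) ^ s ≤ (1 + v ^ 2) ^ s :=
  rpow_le_rpow (by positivity) (add_le_add_right (sq_le_sq.mpr h) 1) hs

lemma one_add_sq_add_rpow_le {s : ℝ} (hs : 0 ≤ s) (a b : ℝ) :
    (1 + (a + b) ^ 2) ^ s ≤ 4 ^ s * ((1 + a ^ 2) ^ s + (1 + b ^ 2) ^ s) := by
  wlog hab : b ^ 2 ≤ a ^ 2 generalizing a b
  · rw [add_comm a, add_comm ((1 + a ^ 2) ^ s)]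
    exact this b a (le_of_not_ge hab)
  calc (1 + (a + b) ^ 2) ^ s ≤ (4 * (1 + a ^ 2)) ^ s := by
        gcongr
        nlinarith [sq_nonneg (a - b)]
    _ = 4 ^ s * (1 + a ^ 2) ^ s := mul_rpow (by norm_num) (by positivity)
    _ ≤ 4 ^ s * ((1 + a ^ 2) ^ s + (1 + b ^ 2) ^ s) := by
        gcongr
        exact le_add_of_nonneg_right (by positivity)

lemma sqrt_one_add_sq_add_le (a b : ℝ) :
    √(1 + (a + b) ^ 2) ≤ √(1 + a ^ 2) + √(1 + b ^ 2) := by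
  have ha := sq_sqrt (by positivity : (0 : ℝ) ≤ 1 + a ^ 2)
  have hb := sq_sqrt (by positivity : (0 : ℝ) ≤ 1 + b ^ 2)
  have hab : |a * b| ≤ √(1 + a ^ 2) * √(1 + b ^ 2) := by
    rw [← sqrt_mul (by positivity)]
    exact abs_le_sqrt (by nlinarith [sq_nonneg a, sq_nonneg b])
  rw [sqrt_le_left (by positivity)]
  nlinarith [neg_abs_le (a * b)]

lemma one_add_sq_add_rpow_le_add {ρ : ℝ} (hρ₀ : 0 ≤ ρ) (hρ₁ : ρ ≤ 1 / 2) (a b : ℝ) :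
    (1 + (a + b) ^ 2) ^ ρ ≤ (1 + a ^ 2) ^ ρ + (1 + b ^ 2) ^ ρ := by
  have hsqrt (x : ℝ) : (1 + x ^ 2) ^ ρ = √(1 + x ^ 2) ^ (2 * ρ) := by
    rw [sqrt_eq_rpow, ← rpow_mul (by positivity)]
    ring_nf
  simp only [hsqrt]
  calc √(1 + (a + b) ^ 2) ^ (2 * ρ) ≤ (√(1 + a ^ 2) + √(1 + b ^ 2)) ^ (2 * ρ) := by
        gcongr
        exact sqrt_one_add_sq_add_le a b
    _ ≤ _ := rpow_add_le_add_rpow (sqrt_nonneg _) (sqrt_nonneg _) (by linarith) (by linarith)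

lemma exp_mul_one_add_sq_add_rpow_le {δ ρ : ℝ} (hδ : 0 ≤ δ) (hρ₀ : 0 ≤ ρ) (hρ₁ : ρ ≤ 1 / 2)
    (a b : ℝ) :
    exp (δ * (1 + (a + b) ^ 2) ^ ρ) ≤ exp (δ * (1 + a ^ 2) ^ ρ) * exp (δ * (1 + b ^ 2) ^ ρ) := by
  rw [← exp_add, ← mul_add]
  gcongr
  exact one_add_sq_add_rpow_le_add hρ₀ hρ₁ a b

noncomputable def gevreyWeight (r δ ρ x : ℝ) : ℝ :=
  (1 + x ^ 2) ^ (r / 2) * exp (δ * (1 + x ^ 2) ^ ρ)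

noncomputable def gevreyWeightDeriv (r δ ρ x : ℝ) : ℝ :=
  x * (1 + x ^ 2) ^ (r / 2 - 1) * (r + 2 * ρ * (δ * (1 + x ^ 2) ^ ρ)) * exp (δ * (1 + x ^ 2) ^ ρ)

lemma hasDerivAt_gevreyWeight (r δ ρ x : ℝ) :
    HasDerivAt (gevreyWeight r δ ρ) (gevreyWeightDeriv r δ ρ x) x := by
  have hu : HasDerivAt (fun y : ℝ => 1 + y ^ 2) (2 * x) x := by
    simpa using (hasDerivAt_pow 2 x).const_add 1
  have hu₀ : 1 + x ^ 2 ≠ 0 := by positivity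
  refine ((hu.rpow_const (p := r / 2) (Or.inl hu₀)).mul
    ((hu.rpow_const (p := ρ) (Or.inl hu₀)).const_mul δ).exp).congr_deriv ?_
  simp only [gevreyWeightDeriv, rpow_sub_one hu₀]
  field_simp

lemma abs_gevreyWeightDeriv_le {r δ ρ : ℝ} (hr : 0 ≤ r) (hδ : 0 ≤ δ) (hρ₀ : 0 ≤ ρ)
    (hρ₁ : ρ ≤ 1 / 2) (x : ℝ) :
    |gevreyWeightDeriv r δ ρ x| ≤ r * (1 + x ^ 2) ^ ((r - 1) / 2) +
      (r + 1) * δ * (1 + x ^ 2) ^ ((r - 1) / 2 + ρ) * exp (δ * (1 + x ^ 2) ^ ρ) := by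
  rw [gevreyWeightDeriv]
  set u := 1 + x ^ 2
  set t := δ * u ^ ρ
  have hu : 0 < u := by positivity
  have ht : 0 ≤ t := by positivity
  have hx : |x| * u ^ (r / 2 - 1) ≤ u ^ ((r - 1) / 2) := by
    calc |x| * u ^ (r / 2 - 1) ≤ u ^ (1 / 2 : ℝ) * u ^ (r / 2 - 1) := by
          gcongr
          rw [← sqrt_eq_rpow]
          exact abs_le_sqrt (by linarith)
      _ = u ^ ((r - 1) / 2) := by rw [← rpow_add hu]; ring_nf
  calc |x * u ^ (r / 2 - 1) * (r + 2 * ρ * t) * exp t|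
        = |x| * u ^ (r / 2 - 1) * ((r + 2 * ρ * t) * exp t) := by
        rw [mul_assoc (x * _), abs_mul, abs_mul, abs_of_pos (by positivity : 0 < u ^ (r / 2 - 1)),
          abs_of_nonneg (by positivity : 0 ≤ (r + 2 * ρ * t) * exp t)]
    _ ≤ u ^ ((r - 1) / 2) * ((r + t) * exp t) := by
        gcongr
        nlinarith
    _ ≤ u ^ ((r - 1) / 2) * (r + (r + 1) * t * exp t) := by
        gcongr
        nlinarith [exp_le_one_add_mul_exp t, exp_pos t]
    _ = _ := by rw [rpow_add hu]; ring

lemma abs_gevreyWeightDeriv_le_of_abs_sub_le {r δ ρ : ℝ} (hr : 1 ≤ r) (hδ : 0 ≤ δ)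
    (hρ₀ : 0 ≤ ρ) (hρ₁ : ρ ≤ 1 / 2) {c η D : ℝ} (hc : |c - η| ≤ |D|) :
    |gevreyWeightDeriv r δ ρ c| ≤ (r + 1) * 4 ^ r *
      ((1 + D ^ 2) ^ ((r - 1) / 2) + (1 + η ^ 2) ^ ((r - 1) / 2) +
        δ * ((1 + D ^ 2) ^ ((r - 1) / 2 + ρ) + (1 + η ^ 2) ^ ((r - 1) / 2 + ρ)) *
          exp (δ * (1 + D ^ 2) ^ ρ) * exp (δ * (1 + η ^ 2) ^ ρ)) := by
  have hpow {s : ℝ} (hs₀ : 0 ≤ s) (hs₁ : s ≤ r) :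
      (1 + c ^ 2) ^ s ≤ 4 ^ r * ((1 + D ^ 2) ^ s + (1 + η ^ 2) ^ s) := by
    calc (1 + c ^ 2) ^ s ≤ 4 ^ s * ((1 + (c - η) ^ 2) ^ s + (1 + η ^ 2) ^ s) := by
          simpa only [sub_add_cancel] using one_add_sq_add_rpow_le hs₀ (c - η) η
      _ ≤ 4 ^ r * ((1 + D ^ 2) ^ s + (1 + η ^ 2) ^ s) := by
          gcongr 4 ^ ?_ * (?_ + _)
          · norm_num
          · exact one_add_sq_rpow_le_of_abs_le hs₀ hc
  have hexp :
      exp (δ * (1 + c ^ 2) ^ ρ) ≤ exp (δ * (1 + D ^ 2) ^ ρ) * exp (δ * (1 + η ^ 2) ^ ρ) := by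
    calc exp (δ * (1 + c ^ 2) ^ ρ)
        ≤ exp (δ * (1 + (c - η) ^ 2) ^ ρ) * exp (δ * (1 + η ^ 2) ^ ρ) := by
          simpa only [sub_add_cancel] using exp_mul_one_add_sq_add_rpow_le hδ hρ₀ hρ₁ (c - η) η
      _ ≤ exp (δ * (1 + D ^ 2) ^ ρ) * exp (δ * (1 + η ^ 2) ^ ρ) := by
          gcongr exp (δ * ?_) * _
          exact one_add_sq_rpow_le_of_abs_le hρ₀ hc
  calc |gevreyWeightDeriv r δ ρ c|
      ≤ r * (1 + c ^ 2) ^ ((r - 1) / 2) +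
          (r + 1) * δ * (1 + c ^ 2) ^ ((r - 1) / 2 + ρ) * exp (δ * (1 + c ^ 2) ^ ρ) :=
        abs_gevreyWeightDeriv_le (by linarith) hδ hρ₀ hρ₁ c
    _ ≤ (r + 1) * (4 ^ r * ((1 + D ^ 2) ^ ((r - 1) / 2) + (1 + η ^ 2) ^ ((r - 1) / 2))) +
          (r + 1) * δ *
            (4 ^ r * ((1 + D ^ 2) ^ ((r - 1) / 2 + ρ) + (1 + η ^ 2) ^ ((r - 1) / 2 + ρ))) *
            (exp (δ * (1 + D ^ 2) ^ ρ) * exp (δ * (1 + η ^ 2) ^ ρ)) := by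
        gcongr
        · linarith
        · exact hpow (by linarith) (by linarith)
        · exact hpow (by linarith) (by linarith)
    _ = _ := by ring

theorem gevrey_symbol_difference_estimate (r σ δ : ℝ) (hr : 1 ≤ r) (hσ : 1 ≤ σ) (hδ : 0 ≤ δ) :
    ∃ C : ℝ, 0 < C ∧ ∀ ξ η : ℝ,
      |(1 + ξ ^ 2) ^ (r / 2) * Real.exp (δ * (1 + ξ ^ 2) ^ (1 / (2 * σ))) -
          (1 + η ^ 2) ^ (r / 2) * Real.exp (δ * (1 + η ^ 2) ^ (1 / (2 * σ)))| ≤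
        C * |ξ - η| *
          ((1 + |ξ - η| ^ 2) ^ ((r - 1) / 2) + (1 + |η| ^ 2) ^ ((r - 1) / 2) +
            δ * ((1 + |ξ - η| ^ 2) ^ ((r - 1) / 2 + 1 / (2 * σ)) +
                  (1 + |η| ^ 2) ^ ((r - 1) / 2 + 1 / (2 * σ))) *
              Real.exp (δ * (1 + |ξ - η| ^ 2) ^ (1 / (2 * σ))) *
              Real.exp (δ * (1 + |η| ^ 2) ^ (1 / (2 * σ)))) := by
  have hρ₀ : 0 ≤ 1 / (2 * σ) := by positivity
  have hρ₁ : 1 / (2 * σ) ≤ 1 / 2 := by gcongr; linarith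
  refine ⟨(r + 1) * 4 ^ r, by positivity, fun ξ η => ?_⟩
  simp only [sq_abs]
  have hmvt := Convex.norm_image_sub_le_of_norm_hasDerivWithin_le
    (fun c _ => (hasDerivAt_gevreyWeight r δ (1 / (2 * σ)) c).hasDerivWithinAt)
    (fun c hc => abs_gevreyWeightDeriv_le_of_abs_sub_le hr hδ hρ₀ hρ₁
      (D := ξ - η) (by simpa [dist_eq] using hc))
    (convex_closedBall η |ξ - η|) (Metric.mem_closedBall_self (abs_nonneg _))
    (by simp [dist_eq] : ξ ∈ Metric.closedBall η |ξ - η|)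
  rw [norm_eq_abs, norm_eq_abs] at hmvt
  exact hmvt.trans_eq (by ring)
end

section
/- Let σ ≥ 1 and T > 0. Define, for 0 < δ < 1 and 0 ≤ t < T(1-δ)^σ/(2^σ - 1), the function δ(t) = (1/2)(1+δ) + (1/2)^{2+1/δ} { [(1-δ)^σ - t/T]^{1/σ} - [(1-δ)^σ + (2^{σ+1}-1) t/T]^{1/σ} }. Then δ < δ(t) < 1 for all such t. -/
/-! Write `u = (1 - δ) ^ σ`, `s = t / T` and `c = (1/2) ^ (2 + 1/δ)`. The first root is at most the
second, so `δ(t) ≤ (1 + δ) / 2 < 1`. For the lower bound, `c < 1/8` because `1/δ > 1`, and on the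
admissible time range `(2 ^ σ - 1) s < u`, which keeps the second radicand below `4 u`; hence the
second root is at most `4 (1 - δ)` and the perturbation exceeds `-(1 - δ) / 2`. -/

theorem Real.half_rpow_two_add_one_div_lt {δ : ℝ} (hδ0 : 0 < δ) (hδ1 : δ < 1) :
    (1 / 2 : ℝ) ^ (2 + 1 / δ) < 1 / 8 := by
  have h3 : (3 : ℝ) < 2 + 1 / δ := by linarith [one_lt_one_div hδ0 hδ1]
  calc (1 / 2 : ℝ) ^ (2 + 1 / δ) < (1 / 2) ^ (3 : ℝ) :=
        Real.rpow_lt_rpow_of_exponent_gt (by norm_num) (by norm_num) h3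
    _ = 1 / 8 := by norm_num

theorem Real.rpow_one_div_le_mul {σ k a x : ℝ} (hσ : 1 ≤ σ) (hk : 1 ≤ k) (ha : 0 ≤ a)
    (hx : 0 ≤ x) (hxk : x ≤ k * a ^ σ) : x ^ (1 / σ) ≤ k * a := by
  have hσ0 : σ ≠ 0 := by positivity
  calc x ^ (1 / σ) ≤ (k * a ^ σ) ^ (1 / σ) := by gcongr
    _ = k ^ (1 / σ) * a := by
      rw [Real.mul_rpow (by positivity) (by positivity), one_div, Real.rpow_rpow_inv ha hσ0]
    _ ≤ k * a := by
      gcongr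
      exact Real.rpow_le_self_of_one_le hk (div_le_one_of_le₀ hσ (by positivity))

theorem Real.one_le_two_rpow_sub_one {σ : ℝ} (hσ : 1 ≤ σ) : 1 ≤ (2 : ℝ) ^ σ - 1 := by
  linarith [Real.self_le_rpow_of_one_le one_le_two hσ]

theorem add_two_rpow_add_one_sub_one_mul_lt {σ s u : ℝ} (hσ : 1 ≤ σ) (hs : 0 ≤ s)
    (hsu : (2 ^ σ - 1) * s < u) : u + (2 ^ (σ + 1) - 1) * s < 4 * u := by
  have hm := Real.one_le_two_rpow_sub_one hσ
  rw [Real.rpow_add_one two_ne_zero]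
  nlinarith

theorem ovsyannikov_radius_bounds (σ T δ : ℝ) (hσ : 1 ≤ σ) (hT : 0 < T)
    (hδ0 : 0 < δ) (hδ1 : δ < 1) (t : ℝ) (ht0 : 0 ≤ t)
    (ht : t < T * (1 - δ) ^ σ / (2 ^ σ - 1)) :
    δ < (1 / 2) * (1 + δ) + (1 / 2) ^ (2 + 1 / δ) *
        (((1 - δ) ^ σ - t / T) ^ (1 / σ) -
          ((1 - δ) ^ σ + (2 ^ (σ + 1) - 1) * (t / T)) ^ (1 / σ)) ∧
      (1 / 2) * (1 + δ) + (1 / 2) ^ (2 + 1 / δ) *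
        (((1 - δ) ^ σ - t / T) ^ (1 / σ) -
          ((1 - δ) ^ σ + (2 ^ (σ + 1) - 1) * (t / T)) ^ (1 / σ)) < 1 := by
  have hm₁ := Real.one_le_two_rpow_sub_one hσ
  have hs : 0 ≤ t / T := by positivity
  have hadmissible : (2 ^ σ - 1) * (t / T) < (1 - δ) ^ σ := by
    have := (lt_div_iff₀ (by linarith)).mp ht
    rw [mul_div_assoc', div_lt_iff₀ hT]
    linarith
  have hm₂ := Real.one_le_two_rpow_sub_one (by linarith : 1 ≤ σ + 1)
  have hradicand : 0 ≤ (1 - δ) ^ σ - t / T := by nlinarith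
  have hroots : ((1 - δ) ^ σ - t / T) ^ (1 / σ) ≤
      ((1 - δ) ^ σ + (2 ^ (σ + 1) - 1) * (t / T)) ^ (1 / σ) := by
    gcongr
    nlinarith
  have hroot₂ : ((1 - δ) ^ σ + (2 ^ (σ + 1) - 1) * (t / T)) ^ (1 / σ) ≤ 4 * (1 - δ) :=
    Real.rpow_one_div_le_mul hσ (by norm_num) (by linarith) (by positivity)
      (add_two_rpow_add_one_sub_one_mul_lt hσ hs hadmissible).le
  have hc := Real.half_rpow_two_add_one_div_lt hδ0 hδ1
  have hc0 : 0 < (1 / 2 : ℝ) ^ (2 + 1 / δ) := by positivity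
  have hroot₁ : 0 ≤ ((1 - δ) ^ σ - t / T) ^ (1 / σ) := Real.rpow_nonneg hradicand _
  constructor <;> nlinarith
end
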